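/- Guarded morphisms stay guarded iff made guarded: in the coinductive resumption monad T_Σ over a complete Elgot monad T, for f : X → T_Σ(Y + X) define the guarded morphism f§ = out⁻¹ ∘ T(inl + id) ∘ ((Tπ ∘ out ∘ f)†), where π = [inl + id, inl ∘ inr] : (Y+X)+Σ(T_Σ(Y+X)) → (Y+Σ(T_Σ(Y+X)))+X and † is the iteration of T. If f is guarded, i.e., out ∘ f = T(inl + id) ∘ u for some u : X → T(Y + Σ(T_Σ(Y+X))), then f§ = f. -/
import Mathlib


/-- A monad on `Set`, given by a Kleisli triple. -/
structure SetMonad where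
  T : Type → Type
  pure : ∀ {X : Type}, X → T X
  bind : ∀ {X Y : Type}, T X → (X → T Y) → T Y
  pure_bind : ∀ {X Y : Type} (x : X) (f : X → T Y), bind (pure x) f = f x
  bind_pure : ∀ {X : Type} (t : T X), bind t pure = t
  bind_assoc : ∀ {X Y Z : Type} (t : T X) (f : X → T Y) (g : Y → T Z),
    bind (bind t f) g = bind t fun x => bind (f x) g

/-- The functorial action of a `SetMonad`. -/
def SetMonad.map (M : SetMonad) {X Y : Type} (f : X → Y) : M.T X → M.T Y :=
  fun t => M.bind t fun x => M.pure (f x)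

/-- An endofunctor on `Set`. -/
structure SetFunctor where
  F : Type → Type
  map : ∀ {X Y : Type}, (X → Y) → F X → F Y
  map_id : ∀ {X : Type}, map (id : X → X) = id
  map_comp : ∀ {X Y Z : Type} (f : X → Y) (g : Y → Z), map (g ∘ f) = map g ∘ map f

/-- For each `X`, a final coalgebra `T_Σ X = νγ. T(X + Σγ)` of the functor
`γ ↦ T(X + Σγ)`, with structure map `out` (an isomorphism, by Lambek's lemma). -/
structure ResumptionData (M : SetMonad) (S : SetFunctor) where
  TS : Type → Type
  out : ∀ {X : Type}, TS X → M.T (X ⊕ S.F (TS X))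
  outInv : ∀ {X : Type}, M.T (X ⊕ S.F (TS X)) → TS X
  out_outInv : ∀ {X : Type} (t : M.T (X ⊕ S.F (TS X))), out (outInv t) = t
  outInv_out : ∀ {X : Type} (t : TS X), outInv (out t) = t
  /-- finality: every `T(X + Σ–)`-coalgebra has a unique coalgebra morphism to `out`. -/
  final : ∀ {X Y : Type} (g : Y → M.T (X ⊕ S.F Y)),
    ∃! h : Y → TS X,
      ∀ y, out (h y) = M.bind (g y) fun w => M.pure (Sum.map id (S.map h) w)

/-- A complete Elgot monad structure on a `SetMonad`. -/
structure ElgotSetMonad extends SetMonad where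
  iter : ∀ {X Y : Type}, (X → T (Y ⊕ X)) → (X → T Y)
  unfolding : ∀ {X Y : Type} (f : X → T (Y ⊕ X)) (x : X),
    bind (f x) (Sum.elim pure (iter f)) = iter f x
  naturality : ∀ {X Y Z : Type} (f : X → T (Y ⊕ X)) (g : Y → T Z) (x : X),
    bind (iter f x) g =
      iter (fun x' => bind (f x')
        (Sum.elim (fun y => bind (g y) fun z => pure (Sum.inl z))
          (fun x'' => pure (Sum.inr x'')))) x
  dinaturality : ∀ {X Y Z : Type} (g : X → T (Y ⊕ Z)) (h : Z → T (Y ⊕ X)) (x : X),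
    iter (fun x' => bind (g x') (Sum.elim (fun y => pure (Sum.inl y)) h)) x =
      bind (g x) (Sum.elim pure
        (iter fun z => bind (h z) (Sum.elim (fun y => pure (Sum.inl y)) g)))
  codiagonal : ∀ {X Y : Type} (g : X → T ((Y ⊕ X) ⊕ X)) (x : X),
    iter (fun x' => bind (g x') fun w => pure (Sum.elim id Sum.inr w)) x = iter (iter g) x
  uniformity : ∀ {A B X : Type} (f : A → T (X ⊕ A)) (g : B → T (X ⊕ B)) (h : B → A),
    (∀ b, f (h b) = bind (g b) fun w => pure (Sum.map id h w)) →
    ∀ b, iter f (h b) = iter g b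

/-- The guard-ification `f§ = out⁻¹ ∘ T(inl + id) ∘ (Tπ ∘ out ∘ f)†` of
`f : X → T_Σ(Y + X)`, where `π = [inl + id, inl ∘ inr]`. -/
noncomputable def guardify (E : ElgotSetMonad) (S : SetFunctor)
    (R : ResumptionData E.toSetMonad S) {X Y : Type}
    (f : X → R.TS (Y ⊕ X)) : X → R.TS (Y ⊕ X) :=
  fun x =>
    R.outInv
      (E.bind
        (E.iter (fun x' =>
          E.bind (R.out (f x')) fun w =>
            E.pure
              ((Sum.elim (Sum.map Sum.inl id) (fun s => Sum.inl (Sum.inr s))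
                  w : (Y ⊕ S.F (R.TS (Y ⊕ X))) ⊕ X))) x)
        (fun w => E.pure (Sum.map Sum.inl id w)))

/-- If `f : X → T_Σ(Y + X)` is guarded, i.e. `out ∘ f = T(inl + id) ∘ u` for some
`u : X → T(Y + Σ T_Σ(Y+X))`, then `f§ = f`. -/
theorem guardify_of_guarded (E : ElgotSetMonad) (S : SetFunctor)
    (R : ResumptionData E.toSetMonad S) {X Y : Type}
    (f : X → R.TS (Y ⊕ X)) (u : X → E.T (Y ⊕ S.F (R.TS (Y ⊕ X))))
    (hguard : ∀ x, R.out (f x) = E.bind (u x) fun w => E.pure (Sum.map Sum.inl id w)) :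
    guardify E S R f = f := by
  funext x
  set g : X → E.T ((Y ⊕ S.F (R.TS (Y ⊕ X))) ⊕ X) := fun x' =>
    E.bind (R.out (f x')) fun w =>
      E.pure (Sum.elim (Sum.map Sum.inl id) (fun s => Sum.inl (Sum.inr s)) w) with hg
  have hgeq : ∀ x', g x' = E.bind (u x') fun v => E.pure (Sum.inl v) := by
    intro x'
    rw [hg]
    simp only [hguard, E.bind_assoc]
    congr 1
    funext v
    rw [E.pure_bind]
    cases v <;> rfl
  have hiter : ∀ x', E.iter g x' = u x' := by
    intro x'
    rw [← E.unfolding g x', hgeq, E.bind_assoc]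
    have : (fun v => E.bind (E.pure (Sum.inl v : (Y ⊕ S.F (R.TS (Y ⊕ X))) ⊕ X))
        (Sum.elim E.pure (E.iter g))) = E.pure := by
      funext v; rw [E.pure_bind]; rfl
    rw [this, E.bind_pure]
  show R.outInv (E.bind (E.iter g x) fun w => E.pure (Sum.map Sum.inl id w)) = f x
  rw [hiter, ← hguard, R.outInv_out]
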